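/- arXiv:2510.16481 — 3 statements merged into one kernel-verified Lean document; each statement's English description precedes it below -/
import Mathlib

section
/- Let n = 2^m and v be an integer point of the Hadamard polytope Had. Then supp(v) = {a ∈ F_2^m : v(a) ≠ 0} is a linear subspace of F_2^m. -/
open scoped BigOperators Classical

noncomputable section

/-- `F m` is the vector space `𝔽₂^m`. -/
abbrev F (m : ℕ) := Fin m → ZMod 2

/-- The standard dot product on `𝔽₂^m`. -/
def dotF {m : ℕ} (a b : F m) : ZMod 2 := ∑ i, a i * b i

/-- `had c` is the column of the Hadamard matrix indexed by `c`: `had c a = (-1)^⟨a,c⟩`. -/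
def had {m : ℕ} (c : F m) : F m → ℝ := fun a => (-1 : ℝ) ^ (dotF a c).val

/-- The Hadamard polytope: the convex hull of the columns of the Hadamard matrix. -/
def Had (m : ℕ) : Set (F m → ℝ) := convexHull ℝ (Set.range (had (m := m)))

/-- A vector has all integer coordinates. -/
def IsIntPoint {ι : Type*} (v : ι → ℝ) : Prop := ∀ a, ∃ z : ℤ, v a = z

lemma zmod2_cases : ∀ x : ZMod 2, x = 0 ∨ x = 1 := by decide

lemma dotF_add_left {m : ℕ} (a b c : F m) :
    dotF (a + b) c = dotF a c + dotF b c := by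
  simp [dotF, add_mul, Finset.sum_add_distrib]

theorem supp_of_int_point_is_subspace (m : ℕ) (v : F m → ℝ)
    (hv : v ∈ Had m) (hint : IsIntPoint v) :
    ∃ W : Submodule (ZMod 2) (F m), ∀ a : F m, a ∈ W ↔ v a ≠ 0 := by
  rw [Had, convexHull_range_eq_exists_affineCombination] at hv
  obtain ⟨s, w, hw0, hw1, hvw⟩ := hv
  rw [Finset.affineCombination_eq_linear_combination s had w hw1] at hvw
  -- extend weights to all of `F m`
  set W : F m → ℝ := fun c => if c ∈ s then w c else 0 with hW
  have hW0 : ∀ c, 0 ≤ W c := by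
    intro c; by_cases hc : c ∈ s
    · simp only [hW, hc, if_true]; exact hw0 c hc
    · simp [hW, hc]
  have hW1 : ∑ c, W c = 1 := by
    rw [hW, Finset.sum_ite_mem, Finset.univ_inter, hw1]
  have hvW : ∀ a, v a = ∑ c, W c * had c a := by
    intro a
    rw [← hvw]
    simp only [Finset.sum_apply, Pi.smul_apply, smul_eq_mul, hW, ite_mul, zero_mul,
      Finset.sum_ite_mem, Finset.univ_inter]
  -- the key quantity
  set φ : F m → ℝ := fun a => ∑ c ∈ Finset.univ.filter (fun c => dotF a c = 1), W c with hφ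
  have hval : ∀ a, v a = 1 - 2 * φ a := by
    intro a
    rw [hvW a, ← Finset.sum_filter_add_sum_filter_not Finset.univ (fun c => dotF a c = 1)]
    have h1 : ∑ c ∈ Finset.univ.filter (fun c => dotF a c = 1), W c * had c a = -φ a := by
      rw [hφ, ← Finset.sum_neg_distrib]
      refine Finset.sum_congr rfl fun c hc => ?_
      have : dotF a c = 1 := (Finset.mem_filter.mp hc).2
      simp [had, this, ZMod.val_one]
    have h2 : ∑ c ∈ Finset.univ.filter (fun c => ¬ dotF a c = 1), W c * had c a
        = 1 - φ a := by
      have he : ∑ c ∈ Finset.univ.filter (fun c => ¬ dotF a c = 1), W c * had c a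
          = ∑ c ∈ Finset.univ.filter (fun c => ¬ dotF a c = 1), W c := by
        refine Finset.sum_congr rfl fun c hc => ?_
        have h := (Finset.mem_filter.mp hc).2
        have : dotF a c = 0 := (zmod2_cases _).resolve_right h
        simp [had, this, ZMod.val_one]
      rw [he]
      have := Finset.sum_filter_add_sum_filter_not Finset.univ
        (fun c => dotF a c = 1) W
      rw [hW1] at this
      rw [hφ]; linarith
    rw [h1, h2]; ring
  have hφ0 : ∀ a, 0 ≤ φ a := fun a => Finset.sum_nonneg fun c _ => hW0 c
  have hφ1 : ∀ a, φ a ≤ 1 := by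
    intro a
    rw [hφ, ← hW1]
    exact Finset.sum_le_sum_of_subset_of_nonneg (Finset.subset_univ _)
      (fun c _ _ => hW0 c)
  -- the carrier predicate
  set P : F m → Prop := fun a =>
    (∀ c, dotF a c = 1 → W c = 0) ∨ (∀ c, dotF a c ≠ 1 → W c = 0) with hP
  have hzero : P 0 := by
    left; intro c hc
    exfalso
    have : dotF 0 c = 0 := by simp [dotF]
    rw [this] at hc; exact one_ne_zero hc.symm
  have key1 : ∀ x y : ZMod 2, x + y = 1 → (x = 1 ∨ y = 1) := by decide
  have key2 : ∀ x y : ZMod 2, x + y = 1 → (x ≠ 1 ∨ y ≠ 1) := by decide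
  have key3 : ∀ x y : ZMod 2, x + y ≠ 1 → x ≠ 1 → y ≠ 1 := by decide
  have key4 : ∀ x y : ZMod 2, x + y ≠ 1 → y ≠ 1 → x ≠ 1 := by decide
  have hadd : ∀ a b, P a → P b → P (a + b) := by
    intro a b ha hb
    rcases ha with ha | ha <;> rcases hb with hb | hb
    · left; intro c hc
      rw [dotF_add_left] at hc
      rcases key1 _ _ hc with h | h
      exacts [ha c h, hb c h]
    · right; intro c hc
      rw [dotF_add_left] at hc
      by_cases h : dotF a c = 1
      · exact ha c h
      · exact hb c (key3 _ _ hc h)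
    · right; intro c hc
      rw [dotF_add_left] at hc
      by_cases h : dotF b c = 1
      · exact hb c h
      · exact ha c (key4 _ _ hc h)
    · left; intro c hc
      rw [dotF_add_left] at hc
      rcases key2 _ _ hc with h | h
      exacts [ha c h, hb c h]
  refine ⟨{ carrier := {a | P a}
            zero_mem' := hzero
            add_mem' := fun {a b} ha hb => hadd a b ha hb
            smul_mem' := by
              intro t a ha
              rcases zmod2_cases t with h | h
              · rw [h, zero_smul]; exact hzero
              · rw [h, one_smul]; exact ha }, ?_⟩
  intro a
  constructor
  · intro haP
    rcases haP with h | h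
    · have : φ a = 0 := Finset.sum_eq_zero fun c hc => h c (Finset.mem_filter.mp hc).2
      rw [hval a, this]; norm_num
    · have h2 : ∑ c ∈ Finset.univ.filter (fun c => ¬ dotF a c = 1), W c = 0 :=
        Finset.sum_eq_zero fun c hc => h c (Finset.mem_filter.mp hc).2
      have h3 := Finset.sum_filter_add_sum_filter_not Finset.univ
        (fun c => dotF a c = 1) W
      rw [hW1] at h3
      have : φ a = 1 := by rw [hφ]; linarith
      rw [hval a, this]; norm_num
  · intro hv0
    obtain ⟨z, hz⟩ := hint a
    have hb1 : (z : ℝ) ≤ 1 := by rw [← hz, hval a]; have := hφ0 a; linarith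
    have hb2 : (-1 : ℝ) ≤ z := by rw [← hz, hval a]; have := hφ1 a; linarith
    have hz1 : z ≤ 1 := by exact_mod_cast hb1
    have hz2 : -1 ≤ z := by exact_mod_cast hb2
    have hzne : z ≠ 0 := by rintro rfl; exact hv0 (by simpa using hz)
    have : z = 1 ∨ z = -1 := by omega
    rcases this with rfl | rfl
    · -- φ a = 0
      have hφa : φ a = 0 := by
        rw [hval a] at hz; push_cast at hz; linarith
      left
      intro c hc
      have := (Finset.sum_eq_zero_iff_of_nonneg (fun c _ => hW0 c)).mp hφa
      exact this c (Finset.mem_filter.mpr ⟨Finset.mem_univ c, hc⟩)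
    · -- φ a = 1
      have hφa : φ a = 1 := by
        rw [hval a] at hz; push_cast at hz; linarith
      right
      intro c hc
      have h3 := Finset.sum_filter_add_sum_filter_not Finset.univ
        (fun c => dotF a c = 1) W
      rw [hW1] at h3
      have h2 : ∑ c ∈ Finset.univ.filter (fun c => ¬ dotF a c = 1), W c = 0 := by
        rw [hφ] at hφa; linarith
      have := (Finset.sum_eq_zero_iff_of_nonneg
        (fun c _ => hW0 c)).mp h2
      exact this c (Finset.mem_filter.mpr ⟨Finset.mem_univ c, hc⟩)
end
end

section
/- Let n = 2^m. The map sending an affine subspace A = W^⊥ + b of F_2^m to the vector v_A = (1/|A|) Σ_{c ∈ A} h_c is a bijection between the set of affine subspaces of F_2^m and the set of integer points of the Hadamard polytope Had. -/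
open scoped BigOperators Classical

noncomputable section

lemma zmod2_elim (x : ZMod 2) : x = 0 ∨ x = 1 := by revert x; decide

lemma zmod2_add_ne' : ∀ x y : ZMod 2, x ≠ y → x + y = 1 := by decide

lemma zmod2_self (x : ZMod 2) : x + x = 0 := CharTwo.add_self_eq_zero x

lemma addself {m : ℕ} (x : F m) : x + x = 0 := by
  funext i; exact CharTwo.add_self_eq_zero (x i)

lemma dotF_add_right {m : ℕ} (a b c : F m) : dotF a (b + c) = dotF a b + dotF a c := by
  simp [dotF, mul_add, Finset.sum_add_distrib]

lemma dotF_comm {m : ℕ} (a b : F m) : dotF a b = dotF b a := by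
  simp [dotF, mul_comm]

lemma dotF_zero_right {m : ℕ} (a : F m) : dotF a 0 = 0 := by simp [dotF]

lemma neg_one_pow_add (x y : ZMod 2) : ((-1:ℝ))^(x+y).val = (-1)^x.val * (-1)^y.val := by
  have h1 : (1 : ZMod 2).val = 1 := rfl
  have h2 : ((1 : ZMod 2) + 1).val = 0 := rfl
  rcases zmod2_elim x with rfl | rfl <;> rcases zmod2_elim y with rfl | rfl <;>
    simp only [h2, h1, add_zero, zero_add, ZMod.val_zero] <;> norm_num

lemma had_add {m : ℕ} (c d : F m) (a : F m) : had (c + d) a = had c a * had d a := by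
  simp [had, dotF_add_right, neg_one_pow_add]

lemma had_zero {m : ℕ} (a : F m) : had 0 a = 1 := by
  simp [had, dotF_zero_right]

lemma had_eq {m : ℕ} (c a : F m) : had c a = if dotF a c = 0 then 1 else -1 := by
  have h1 : (1 : ZMod 2).val = 1 := rfl
  rcases zmod2_elim (dotF a c) with h | h <;> simp [had, h, h1]

lemma had_comm {m : ℕ} (c a : F m) : had c a = had a c := by
  simp [had, dotF_comm a c]

lemma had_le_one {m : ℕ} (c a : F m) : had c a ≤ 1 := by
  rw [had_eq]; split <;> norm_num

lemma neg_one_le_had {m : ℕ} (c a : F m) : -1 ≤ had c a := by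
  rw [had_eq]; split <;> norm_num

lemma sum_had_eq_zero {m : ℕ} {s : Finset (F m)} {a u₀ : F m}
    (hs : ∀ c ∈ s, c + u₀ ∈ s) (h : had u₀ a = -1) : ∑ c ∈ s, had c a = 0 := by
  have he : ∑ c ∈ s, had (c + u₀) a = ∑ c ∈ s, had c a := by
    refine Finset.sum_equiv (Equiv.addRight u₀) (fun c => ⟨fun hc => hs c hc, fun hc => ?_⟩)
      (fun c _ => rfl)
    have := hs _ hc
    simp only [Equiv.coe_addRight] at this
    rwa [add_assoc, addself, add_zero] at this
  have he2 : ∀ c ∈ s, had (c + u₀) a = - had c a := by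
    intro c _; rw [had_add, h, mul_neg_one]
  rw [Finset.sum_congr rfl he2, Finset.sum_neg_distrib] at he
  linarith

lemma dotF_single {m : ℕ} (i : Fin m) (c : F m) : dotF c (Pi.single i 1) = c i := by
  simp [dotF, Pi.single_apply, mul_ite, Finset.sum_ite_eq']

lemma sum_had_mul {m : ℕ} (c c' : F m) :
    ∑ a, had c a * had c' a = (if c = c' then ((2:ℝ))^m else 0) := by
  have : ∀ a, had c a * had c' a = had (c + c') a := fun a => (had_add c c' a).symm
  simp only [this]
  by_cases h : c = c'
  · subst h
    simp only [addself, had_zero, if_pos rfl, Finset.sum_const, Finset.card_univ, nsmul_eq_mul,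
      mul_one]
    simp [Fintype.card_fun]
  · rw [if_neg h]
    have hd : c + c' ≠ 0 := by
      intro h0
      apply h
      have := congrArg (· + c') h0
      simpa [add_assoc, addself] using this
    obtain ⟨i, hi⟩ : ∃ i, (c + c') i ≠ 0 := by
      by_contra hc; push_neg at hc; exact hd (funext hc)
    have hsum : ∀ a : F m, had (c + c') a = had a (c + c') := fun a => had_comm _ _
    simp only [hsum]
    apply sum_had_eq_zero (u₀ := Pi.single i 1) (fun x _ => Finset.mem_univ _)
    rw [had_eq, dotF_single]
    rcases zmod2_elim ((c + c') i) with h0 | h1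
    · exact absurd h0 hi
    · rw [h1]; simp

lemma coset_alg {m : ℕ} (c c₁ c₂ b : F m) :
    (c + (c₁ + c₂)) + b = (c + b) + ((c₁ + b) + (c₂ + b)) := by
  have hb : b + b = 0 := addself b
  have h : (c + b) + ((c₁ + b) + (c₂ + b)) = (c + (c₁ + c₂)) + b + (b + b) := by abel
  rw [h, hb, add_zero]

lemma coset_closed {m : ℕ} {A : Finset (F m)} {W : Submodule (ZMod 2) (F m)} {b : F m}
    (hA : ∀ c : F m, c ∈ A ↔ c + b ∈ W) :
    ∀ c ∈ A, ∀ c₁ ∈ A, ∀ c₂ ∈ A, c + (c₁ + c₂) ∈ A := by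
  intro c hc c₁ hc₁ c₂ hc₂
  rw [hA] at hc hc₁ hc₂ ⊢
  rw [coset_alg]
  exact W.add_mem hc (W.add_mem hc₁ hc₂)

lemma coset_mem_b {m : ℕ} {A : Finset (F m)} {W : Submodule (ZMod 2) (F m)} {b : F m}
    (hA : ∀ c : F m, c ∈ A ↔ c + b ∈ W) : b ∈ A := by
  rw [hA, addself]; exact W.zero_mem

lemma coset_sum_val {m : ℕ} {A : Finset (F m)} {W : Submodule (ZMod 2) (F m)} {b : F m}
    (hA : ∀ c : F m, c ∈ A ↔ c + b ∈ W) (a : F m) :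
    (∑ c ∈ A, had c a = (A.card : ℝ) * had b a) ∨ (∑ c ∈ A, had c a = 0) := by
  by_cases hconst : ∀ c ∈ A, dotF a c = dotF a b
  · left
    have : ∀ c ∈ A, had c a = had b a := by
      intro c hc; rw [had_eq, had_eq, hconst c hc]
    rw [Finset.sum_congr rfl this, Finset.sum_const, nsmul_eq_mul]
  · right
    push_neg at hconst
    obtain ⟨c₁, hc₁, hne⟩ := hconst
    have hb : b ∈ A := coset_mem_b hA
    apply sum_had_eq_zero (u₀ := c₁ + b)
    · intro c hc; exact coset_closed hA c hc c₁ hc₁ b hb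
    · rw [had_eq, dotF_add_right, zmod2_add_ne' _ _ hne]
      simp

lemma had_injective {m : ℕ} : Function.Injective (had (m := m)) := by
  intro c c' h
  by_contra hne
  obtain ⟨i, hi⟩ : ∃ i, c i ≠ c' i := by
    by_contra hc; push_neg at hc; exact hne (funext hc)
  have := congrFun h (Pi.single i 1)
  rw [had_comm, had_comm c', had_eq, had_eq, dotF_single, dotF_single] at this
  rcases zmod2_elim (c i) with h0 | h0 <;> rcases zmod2_elim (c' i) with h1 | h1 <;>
    rw [h0, h1] at hi this <;> simp at hi this <;> norm_num at this

lemma fourier_coset {m : ℕ} (A : Finset (F m)) (c : F m) :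
    ∑ a, ((A.card : ℝ)⁻¹ * ∑ c' ∈ A, had c' a) * had c a
      = (A.card : ℝ)⁻¹ * (if c ∈ A then ((2:ℝ))^m else 0) := by
  have h1 : ∀ a : F m, ((A.card : ℝ)⁻¹ * ∑ c' ∈ A, had c' a) * had c a
      = (A.card : ℝ)⁻¹ * ∑ c' ∈ A, had c' a * had c a := by
    intro a; rw [mul_assoc, Finset.sum_mul]
  simp only [h1]
  rw [← Finset.mul_sum]
  congr 1
  rw [Finset.sum_comm]
  calc ∑ c' ∈ A, ∑ a, had c' a * had c a
      = ∑ c' ∈ A, (if c' = c then ((2:ℝ))^m else 0) := by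
        exact Finset.sum_congr rfl fun c' _ => sum_had_mul c' c
    _ = if c ∈ A then ((2:ℝ))^m else 0 := by rw [Finset.sum_ite_eq' A c (fun _ => ((2:ℝ))^m)]

lemma dotF_smul_right {m : ℕ} (a : F m) (r : ZMod 2) (x : F m) :
    dotF a (r • x) = r * dotF a x := by
  simp [dotF, Finset.mul_sum, mul_left_comm]

lemma zmod2_eq_of_add_zero : ∀ x y : ZMod 2, x + y = 0 → x = y := by decide

theorem affine_subspaces_biject_with_int_points (m : ℕ) :
    Set.BijOn (fun A : Finset (F m) => fun a => (A.card : ℝ)⁻¹ * ∑ c ∈ A, had c a)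
      {A : Finset (F m) | ∃ (W : Submodule (ZMod 2) (F m)) (b : F m),
        ∀ c : F m, c ∈ A ↔ c + b ∈ W}
      {v : F m → ℝ | v ∈ Had m ∧ IsIntPoint v} := by
  refine ⟨?_, ?_, ?_⟩
  · -- MapsTo
    rintro A ⟨W, b, hA⟩
    have hb : b ∈ A := coset_mem_b hA
    have hcard : 0 < A.card := Finset.card_pos.2 ⟨b, hb⟩
    have hcR : (0:ℝ) < (A.card : ℝ) := by exact_mod_cast hcard
    constructor
    · -- membership in Had
      have h1 : (fun a => (A.card : ℝ)⁻¹ * ∑ c ∈ A, had c a)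
          = ∑ c ∈ A, ((A.card : ℝ)⁻¹) • had c := by
        funext a
        simp [Finset.sum_apply, Finset.mul_sum]
      show (fun a => (A.card : ℝ)⁻¹ * ∑ c ∈ A, had c a) ∈ Had m
      rw [h1, Had]
      refine Convex.sum_mem (convex_convexHull ℝ _) (fun c _ => by positivity) ?_
        (fun c _ => subset_convexHull ℝ _ ⟨c, rfl⟩)
      rw [Finset.sum_const, nsmul_eq_mul]
      field_simp
    · -- IsIntPoint
      intro a
      show ∃ z : ℤ, (A.card : ℝ)⁻¹ * (∑ c ∈ A, had c a) = (z : ℝ)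
      rcases coset_sum_val hA a with h | h
      · refine ⟨if dotF a b = 0 then 1 else -1, ?_⟩
        rw [h, had_eq, ← mul_assoc, inv_mul_cancel₀ (ne_of_gt hcR), one_mul]
        split <;> simp
      · exact ⟨0, by rw [h]; simp⟩
  · -- InjOn
    rintro A₁ ⟨W₁, b₁, hA₁⟩ A₂ ⟨W₂, b₂, hA₂⟩ heq
    have h1 : (0:ℝ) < (A₁.card : ℝ) := by
      exact_mod_cast Finset.card_pos.2 ⟨b₁, coset_mem_b hA₁⟩
    have h2 : (0:ℝ) < (A₂.card : ℝ) := by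
      exact_mod_cast Finset.card_pos.2 ⟨b₂, coset_mem_b hA₂⟩
    apply Finset.ext
    intro c
    have e := congrArg (fun v : F m → ℝ => ∑ a, v a * had c a) heq
    simp only [] at e
    rw [fourier_coset, fourier_coset] at e
    constructor
    · intro hc1
      by_contra hc2
      rw [if_pos hc1, if_neg hc2, mul_zero] at e
      have := mul_pos (inv_pos.2 h1) (pow_pos (by norm_num : (0:ℝ) < 2) m)
      linarith
    · intro hc2
      by_contra hc1
      rw [if_pos hc2, if_neg hc1, mul_zero] at e
      have := mul_pos (inv_pos.2 h2) (pow_pos (by norm_num : (0:ℝ) < 2) m)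
      linarith
  · -- SurjOn
    rintro v ⟨hvH, hvI⟩
    have hrange : Set.range (had (m := m)) = ↑(Finset.univ.image (had (m := m))) := by
      ext x; simp
    rw [Had, hrange, Finset.mem_convexHull] at hvH
    obtain ⟨w, hw0, hw1, hwv⟩ := hvH
    rw [Finset.centerMass_eq_of_sum_1 _ _ hw1] at hwv
    rw [Finset.sum_image (fun x _ y _ h => had_injective h)] at hwv hw1
    set lam : F m → ℝ := fun c => w (had c) with hlamdef
    have hlam0 : ∀ c, 0 ≤ lam c := fun c =>
      hw0 _ (Finset.mem_image_of_mem _ (Finset.mem_univ c))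
    have hlam1 : ∑ c, lam c = 1 := hw1
    have hv : ∀ a, v a = ∑ c, lam c * had c a := by
      intro a
      have := congrFun hwv a
      simp only [Finset.sum_apply, Pi.smul_apply, id_eq, smul_eq_mul] at this
      exact this.symm
    obtain ⟨c₀, hc₀⟩ : ∃ c₀, lam c₀ ≠ 0 := by
      by_contra hc; push_neg at hc
      simp [hc] at hlam1
    set S : Finset (F m) := Finset.univ.filter (fun c => lam c ≠ 0) with hSdef
    have hc₀S : c₀ ∈ S := by simp [hSdef, hc₀]
    have hlam_pos : ∀ c ∈ S, 0 < lam c := by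
      intro c hc
      refine lt_of_le_of_ne (hlam0 c) (Ne.symm ?_)
      simpa [hSdef] using hc
    have hlam_zero : ∀ c, c ∉ S → lam c = 0 := by
      intro c hc
      by_contra h
      exact hc (by simp [hSdef, h])
    set U := Submodule.span (ZMod 2) (↑(S.image (· + c₀)) : Set (F m)) with hUdef
    set A : Finset (F m) := Finset.univ.filter (fun c => c + c₀ ∈ U) with hAdef
    have hA : ∀ c : F m, c ∈ A ↔ c + c₀ ∈ U := by intro c; simp [hAdef]
    refine ⟨A, ⟨U, c₀, hA⟩, ?_⟩
    have hc₀A : c₀ ∈ A := by rw [hA, addself]; exact U.zero_mem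
    have hcR : (0:ℝ) < (A.card : ℝ) := by
      exact_mod_cast Finset.card_pos.2 ⟨c₀, hc₀A⟩
    funext a
    show (A.card : ℝ)⁻¹ * ∑ c ∈ A, had c a = v a
    by_cases P : ∀ c ∈ S, dotF a c = dotF a c₀
    · -- constant case : both sides equal had c₀ a
      have hU0 : ∀ u ∈ U, dotF a u = 0 := by
        intro u hu
        refine Submodule.span_induction (p := fun x _ => dotF a x = 0) ?_ ?_ ?_ ?_ hu
        · intro x hx
          simp only [Finset.coe_image, Set.mem_image, Finset.mem_coe] at hx
          obtain ⟨c, hcS, rfl⟩ := hx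
          rw [dotF_add_right, P c hcS, zmod2_self]
        · exact dotF_zero_right a
        · intro x y _ _ px py; rw [dotF_add_right, px, py, add_zero]
        · intro r x _ px; rw [dotF_smul_right, px, mul_zero]
      have hconstA : ∀ c ∈ A, had c a = had c₀ a := by
        intro c hc
        rw [hA] at hc
        have h1 : dotF a c + dotF a c₀ = 0 := by
          rw [← dotF_add_right]; exact hU0 _ hc
        rw [had_eq, had_eq, zmod2_eq_of_add_zero _ _ h1]
      have hLHS : ∑ c ∈ A, had c a = (A.card : ℝ) * had c₀ a := by
        rw [Finset.sum_congr rfl hconstA, Finset.sum_const, nsmul_eq_mul]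
      rw [hLHS, ← mul_assoc, inv_mul_cancel₀ (ne_of_gt hcR), one_mul]
      have hvS : v a = ∑ c ∈ S, lam c * had c a := by
        rw [hv a]
        refine (Finset.sum_subset (Finset.subset_univ S) ?_).symm
        intro c _ hc
        rw [hlam_zero c hc, zero_mul]
      have hSsum : ∑ c ∈ S, lam c = 1 := by
        rw [← hlam1]
        refine Finset.sum_subset (Finset.subset_univ S) ?_
        intro c _ hc; exact hlam_zero c hc
      have : ∀ c ∈ S, lam c * had c a = lam c * had c₀ a := by
        intro c hc
        rw [had_eq, had_eq, P c hc]
      rw [hvS, Finset.sum_congr rfl this, ← Finset.sum_mul, hSsum, one_mul]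
    · -- non-constant case : both sides 0
      push_neg at P
      obtain ⟨c₁, hc₁S, hne⟩ := P
      have hu₀U : c₁ + c₀ ∈ U := by
        apply Submodule.subset_span
        simp only [Finset.coe_image, Set.mem_image, Finset.mem_coe]
        exact ⟨c₁, hc₁S, rfl⟩
      have hclosed : ∀ c ∈ A, c + (c₁ + c₀) ∈ A := by
        intro c hc
        rw [hA] at hc ⊢
        have heqn : (c + (c₁ + c₀)) + c₀ = (c + c₀) + (c₁ + c₀) := by abel
        rw [heqn]
        exact U.add_mem hc hu₀U
      have hhadu : had (c₁ + c₀) a = -1 := by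
        rw [had_eq, dotF_add_right, zmod2_add_ne' _ _ hne]
        simp
      have hL : ∑ c ∈ A, had c a = 0 := sum_had_eq_zero hclosed hhadu
      have main : ∀ cP ∈ S, ∀ cN ∈ S, had cP a = 1 → had cN a = -1 → v a = 0 := by
        intro cP hcP cN hcN hP hN
        have hlt : v a < 1 := by
          have hpos : 0 < ∑ c, lam c * (1 - had c a) := by
            apply Finset.sum_pos'
            · intro c _
              have h1 := had_le_one c a
              have h2 := hlam0 c
              nlinarith
            · refine ⟨cN, Finset.mem_univ _, ?_⟩
              rw [hN]
              have := hlam_pos cN hcN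
              nlinarith
          have hexp : ∑ c, lam c * (1 - had c a) = 1 - v a := by
            simp only [mul_sub, mul_one, Finset.sum_sub_distrib, hlam1, ← hv a]
          linarith
        have hgt : -1 < v a := by
          have hpos : 0 < ∑ c, lam c * (1 + had c a) := by
            apply Finset.sum_pos'
            · intro c _
              have h1 := neg_one_le_had c a
              have h2 := hlam0 c
              nlinarith
            · refine ⟨cP, Finset.mem_univ _, ?_⟩
              rw [hP]
              have := hlam_pos cP hcP
              nlinarith
          have hexp : ∑ c, lam c * (1 + had c a) = 1 + v a := by
            simp only [mul_add, mul_one, Finset.sum_add_distrib, hlam1, ← hv a]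
          linarith
        obtain ⟨z, hz⟩ := hvI a
        rw [hz] at hlt hgt ⊢
        have h1 : z < 1 := by exact_mod_cast hlt
        have h2 : (-1:ℤ) < z := by exact_mod_cast hgt
        have hz0 : z = 0 := by omega
        rw [hz0]; norm_num
      rw [hL, mul_zero]
      symm
      have hsigns : (had c₀ a = 1 ∧ had c₁ a = -1) ∨ (had c₀ a = -1 ∧ had c₁ a = 1) := by
        rw [had_eq, had_eq c₁]
        rcases zmod2_elim (dotF a c₀) with h0 | h0 <;> rcases zmod2_elim (dotF a c₁) with h1 | h1 <;>
          simp [h0, h1] <;> exact absurd (h1.trans h0.symm) hne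
      rcases hsigns with ⟨hp, hn⟩ | ⟨hn, hp⟩
      · exact main c₀ hc₀S c₁ hc₁S hp hn
      · exact main c₁ hc₁S c₀ hc₀S hp hn
end
end

section
/- Let n = 2^m. The number of integer points in the Hadamard polytope satisfies |Had ∩ ℤ^n| ≥ 2^{⌊m/2⌋·⌈m/2⌉} = n^{Ω(log n)}. -/
open scoped BigOperators Classical

noncomputable section

/-! ### Auxiliary lemmas -/

lemma zmod2_cases_s11 (s : ZMod 2) : s = 0 ∨ s = 1 := by revert s; decide

lemma zmod2_v0 : ((0:ZMod 2)).val = 0 := rfl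
lemma zmod2_v1 : ((1:ZMod 2)).val = 1 := rfl
lemma zmod2_v2 : ((2:ZMod 2)).val = 0 := by decide

lemma dotF_add {m : ℕ} (b x y : F m) : dotF b (x + y) = dotF b x + dotF b y := by
  simp [dotF, mul_add, Finset.sum_add_distrib]

/-- Character orthogonality over `𝔽₂^k`. -/
lemma char_sum {k : ℕ} (b : F k) :
    ∑ x : F k, ((-1:ℝ)) ^ (dotF b x).val = if b = 0 then (2^k : ℝ) else 0 := by
  split_ifs with hb
  · subst hb
    have h0 : ∀ x : F k, dotF (0 : F k) x = 0 := by intro x; simp [dotF]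
    simp only [h0]
    simp [Finset.card_univ]
  · obtain ⟨i, hi⟩ : ∃ i, b i ≠ 0 := by
      by_contra h
      push_neg at h
      exact hb (funext h)
    have hbi : b i = 1 := by
      rcases zmod2_cases_s11 (b i) with h|h
      · exact absurd h hi
      · exact h
    set δ : F k := Pi.single i 1 with hδ
    have hdot : ∀ x : F k, dotF b (x + δ) = dotF b x + 1 := by
      intro x
      rw [dotF_add]
      congr 1
      simp [dotF, hδ, Pi.single_apply, Finset.sum_ite_eq', hbi]
    have hflip : ∀ s : ZMod 2, ((-1:ℝ))^((s+1 : ZMod 2).val) = -(-1)^s.val := by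
      intro s
      rcases zmod2_cases_s11 s with h|h <;> subst h <;>
        norm_num [zmod2_v0, zmod2_v1, zmod2_v2]
    have h1 : ∑ x : F k, ((-1:ℝ)) ^ (dotF b x).val
        = ∑ x : F k, ((-1:ℝ)) ^ (dotF b (x + δ)).val :=
      (Fintype.sum_equiv (Equiv.addRight δ) _ _ (fun x => rfl)).symm
    have h2 : ∑ x : F k, ((-1:ℝ)) ^ (dotF b (x + δ)).val
        = -∑ x : F k, ((-1:ℝ)) ^ (dotF b x).val := by
      rw [← Finset.sum_neg_distrib]
      exact Finset.sum_congr rfl fun x _ => by rw [hdot x, hflip]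
    have := h1.trans h2
    linarith

lemma kl (m : ℕ) : m / 2 + (m + 1) / 2 = m := by omega

/-- Embedding of the first block of coordinates. -/
def embL (m : ℕ) (s : Fin (m / 2)) : Fin m := ⟨s, by have := s.2; omega⟩

/-- Embedding of the second block of coordinates. -/
def embR (m : ℕ) (j : Fin ((m + 1) / 2)) : Fin m :=
  ⟨m / 2 + j, by have := j.2; omega⟩

/-- The code vector `(x, Mᵀx) ∈ 𝔽₂^m`. -/
def cvec (m : ℕ) (M : Fin (m / 2) → Fin ((m + 1) / 2) → ZMod 2) (x : F (m / 2)) : F m :=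
  fun i => if h : (i : ℕ) < m / 2 then x ⟨i, h⟩
    else ∑ s, M s ⟨(i : ℕ) - m / 2, by have := i.2; omega⟩ * x s

def bvec (m : ℕ) (M : Fin (m / 2) → Fin ((m + 1) / 2) → ZMod 2) (a : F m) : F (m / 2) :=
  fun s => a (embL m s) + ∑ j, M s j * a (embR m j)

lemma dot_cvec (m : ℕ) (M : Fin (m / 2) → Fin ((m + 1) / 2) → ZMod 2) (a : F m)
    (x : F (m / 2)) : dotF a (cvec m M x) = dotF (bvec m M a) x := by
  unfold dotF
  have h1 : ∑ i : Fin m, a i * cvec m M x i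
      = ∑ i : Fin (m / 2 + (m + 1) / 2),
          a (Fin.cast (kl m) i) * cvec m M x (Fin.cast (kl m) i) :=
    (Fintype.sum_equiv (finCongr (kl m)) _ _ (fun i => rfl)).symm
  rw [h1, Fin.sum_univ_add]
  have hL : ∀ s : Fin (m / 2),
      a (Fin.cast (kl m) (Fin.castAdd _ s)) * cvec m M x (Fin.cast (kl m) (Fin.castAdd _ s))
      = a (embL m s) * x s := by
    intro s
    have e1 : Fin.cast (kl m) (Fin.castAdd _ s) = embL m s := by
      apply Fin.ext; simp [embL]
    rw [e1]
    congr 1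
    unfold cvec
    rw [dif_pos (show ((embL m s : Fin m) : ℕ) < m / 2 from s.2)]
    exact congrArg x (Fin.ext rfl)
  have hR : ∀ j : Fin ((m + 1) / 2),
      a (Fin.cast (kl m) (Fin.natAdd _ j)) * cvec m M x (Fin.cast (kl m) (Fin.natAdd _ j))
      = a (embR m j) * ∑ s, M s j * x s := by
    intro j
    have e1 : Fin.cast (kl m) (Fin.natAdd _ j) = embR m j := by
      apply Fin.ext; simp [embR]
    rw [e1]
    congr 1
    unfold cvec
    rw [dif_neg (by simp [embR])]
    apply Finset.sum_congr rfl
    intro s _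
    congr 2
    apply Fin.ext
    simp [embR]
  simp only [hL, hR]
  unfold bvec
  simp only [add_mul, Finset.sum_add_distrib]
  congr 1
  simp only [Finset.mul_sum, Finset.sum_mul]
  rw [Finset.sum_comm]
  exact Finset.sum_congr rfl fun s _ => Finset.sum_congr rfl fun j _ => by ring

/-- The integer point of the Hadamard polytope associated to the matrix `M`:
the centroid of the columns indexed by the graph subspace of `M`. -/
def pt (m : ℕ) (M : Fin (m / 2) → Fin ((m + 1) / 2) → ZMod 2) : F m → ℝ :=
  fun a => (2 ^ (m / 2) : ℝ)⁻¹ * ∑ x : F (m / 2), had (cvec m M x) a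

lemma pt_eq (m : ℕ) (M : Fin (m / 2) → Fin ((m + 1) / 2) → ZMod 2) (a : F m) :
    pt m M a = if bvec m M a = 0 then 1 else 0 := by
  unfold pt had
  have : ∑ x : F (m / 2), ((-1:ℝ)) ^ (dotF a (cvec m M x)).val
      = ∑ x : F (m / 2), ((-1:ℝ)) ^ (dotF (bvec m M a) x).val :=
    Finset.sum_congr rfl fun x _ => by rw [dot_cvec]
  rw [this, char_sum]
  split_ifs
  · rw [inv_mul_cancel₀ (by positivity)]
  · rw [mul_zero]

lemma pt_mem (m : ℕ) (M : Fin (m / 2) → Fin ((m + 1) / 2) → ZMod 2) : pt m M ∈ Had m := by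
  have hpt : pt m M = Finset.centerMass Finset.univ (fun _ : F (m / 2) => (1:ℝ))
      (fun x => had (cvec m M x)) := by
    funext a
    rw [Finset.centerMass]
    simp only [Finset.sum_const, Finset.card_univ, nsmul_eq_mul, mul_one, one_smul]
    rw [Pi.smul_apply, Finset.sum_apply]
    rw [smul_eq_mul]
    unfold pt
    congr 1
    simp [Fintype.card_fun]
  rw [hpt]
  exact Finset.centerMass_mem_convexHull _ (fun _ _ => zero_le_one)
    (by simp [Fintype.card_fun]) (fun x _ => Set.mem_range_self _)

lemma pt_int (m : ℕ) (M : Fin (m / 2) → Fin ((m + 1) / 2) → ZMod 2) :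
    IsIntPoint (pt m M) := by
  intro a
  rw [pt_eq]
  split_ifs
  · exact ⟨1, by norm_num⟩
  · exact ⟨0, by norm_num⟩

lemma pt_inj (m : ℕ) : Function.Injective (pt m) := by
  intro M M' h
  funext s j
  set a : F m := fun i => if h : (i : ℕ) < m / 2 then M ⟨i, h⟩ j
    else if (i : ℕ) = m / 2 + (j : ℕ) then 1 else 0 with ha
  have haL : ∀ s' : Fin (m / 2), a (embL m s') = M s' j := by
    intro s'
    rw [ha]
    simp only [embL]
    exact dif_pos s'.2
  have haR : ∀ j' : Fin ((m + 1) / 2),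
      a (embR m j') = if j' = j then 1 else 0 := by
    intro j'
    rw [ha]
    dsimp only [embR]
    rw [dif_neg (by omega)]
    have : ((m / 2 + (j' : ℕ) : ℕ) = m / 2 + (j : ℕ)) ↔ j' = j := by
      constructor
      · intro h'; apply Fin.ext; omega
      · intro h'; rw [h']
    simp only [this]
  have hb : ∀ N : Fin (m / 2) → Fin ((m + 1) / 2) → ZMod 2,
      bvec m N a = fun s' => M s' j + N s' j := by
    intro N
    funext s'
    unfold bvec
    rw [haL]
    congr 1
    have : ∀ j', N s' j' * a (embR m j') = if j' = j then N s' j' else 0 := by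
      intro j'
      rw [haR]
      split_ifs <;> simp
    simp only [this]
    rw [Finset.sum_ite_eq' Finset.univ j (fun j' => N s' j')]
    simp
  have hM : bvec m M a = 0 := by
    rw [hb]
    funext s'
    have : ∀ u : ZMod 2, u + u = 0 := by decide
    exact this _
  have h1 : pt m M a = 1 := by rw [pt_eq, if_pos hM]
  have h2 : pt m M' a = 1 := by rw [← h]; exact h1
  rw [pt_eq] at h2
  have hM' : bvec m M' a = 0 := by
    by_contra hc
    rw [if_neg hc] at h2
    norm_num at h2
  rw [hb] at hM'
  have := congrFun hM' s
  simp only [Pi.zero_apply] at this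
  have key : ∀ u v : ZMod 2, u + v = 0 → u = v := by decide
  exact key _ _ this

lemma Had_bounded (m : ℕ) : Had m ⊆ {v : F m → ℝ | ∀ a, v a ∈ Set.Icc (-1:ℝ) 1} := by
  apply convexHull_min
  · rintro _ ⟨c, rfl⟩ a
    rcases Nat.even_or_odd (dotF a c).val with h | h
    · rw [show had c a = (-1:ℝ) ^ (dotF a c).val from rfl, h.neg_one_pow]
      constructor <;> norm_num
    · rw [show had c a = (-1:ℝ) ^ (dotF a c).val from rfl, h.neg_one_pow]
      constructor <;> norm_num
  · have : {v : F m → ℝ | ∀ a, v a ∈ Set.Icc (-1:ℝ) 1}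
        = Set.pi Set.univ (fun _ : F m => Set.Icc (-1:ℝ) 1) := by
      ext v; simp [Set.mem_pi, Pi.le_def, forall_and]
    rw [this]
    exact convex_pi (fun _ _ => convex_Icc _ _)

lemma int_points_finite (m : ℕ) :
    {v : F m → ℝ | v ∈ Had m ∧ IsIntPoint v}.Finite := by
  apply Set.Finite.subset (Set.Finite.pi (fun _ : F m => Set.finite_Icc (-1:ℤ) 1)
    |>.image (fun f (a : F m) => ((f a : ℤ) : ℝ)))
  rintro v ⟨hv, hint⟩
  have hbd := Had_bounded m hv
  refine ⟨fun a => Classical.choose (hint a), ?_, ?_⟩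
  · intro a _
    have hz := Classical.choose_spec (hint a)
    have h1 := (hbd a).1
    have h2 := (hbd a).2
    rw [hz] at h1 h2
    constructor
    · exact_mod_cast h1
    · exact_mod_cast h2
  · funext a
    exact (Classical.choose_spec (hint a)).symm

theorem card_int_points_Had_lower (m : ℕ) :
    2 ^ ((m / 2) * ((m + 1) / 2)) ≤
      Nat.card {v : F m → ℝ // v ∈ Had m ∧ IsIntPoint v} := by
  haveI : Finite {v : F m → ℝ // v ∈ Had m ∧ IsIntPoint v} :=
    (int_points_finite m).to_subtype
  have hinj : Function.Injective
      (fun M : Fin (m / 2) → Fin ((m + 1) / 2) → ZMod 2 =>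
        (⟨pt m M, pt_mem m M, pt_int m M⟩ :
          {v : F m → ℝ // v ∈ Had m ∧ IsIntPoint v})) := by
    intro M M' h
    exact pt_inj m (congrArg Subtype.val h)
  have := Nat.card_le_card_of_injective _ hinj
  calc 2 ^ ((m / 2) * ((m + 1) / 2))
      = Nat.card (Fin (m / 2) → Fin ((m + 1) / 2) → ZMod 2) := by
        simp [Nat.card_eq_fintype_card, Fintype.card_fun]
        rw [← pow_mul, Nat.mul_comm]
    _ ≤ _ := this
end
end
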